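/- For all integers n ≥ 0 and k ≥ 0, the number of Dyck paths of semilength n with all peaks at even height and exactly k downsteps ending at ground level equals the number of Motzkin paths of length n with no flatstep at ground level and exactly k downsteps ending at ground level. -/

import Mathlib

/-- A Dyck path: each step is +1 (upstep U) or -1 (downstep D), all partial sums
are nonnegative, and the total sum is 0. -/
def IsDyckPath (P : List ℤ) : Prop :=
  (∀ s ∈ P, s = 1 ∨ s = -1) ∧ (∀ k, 0 ≤ (P.take k).sum) ∧ P.sum = 0

/-- A Motzkin path: each step is +1 (U), 0 (F), or -1 (D), all partial sums
are nonnegative, and the total sum is 0. -/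
def IsMotzkinPath (M : List ℤ) : Prop :=
  (∀ s ∈ M, s = 1 ∨ s = 0 ∨ s = -1) ∧ (∀ k, 0 ≤ (M.take k).sum) ∧ M.sum = 0

/-- A peak at position `i`: an upstep at `i` immediately followed by a downstep. -/
def IsPeak (P : List ℤ) (i : ℕ) : Prop :=
  P[i]? = some 1 ∧ P[i + 1]? = some (-1)

/-- The height of the peak at position `i`: the level reached just after the upstep. -/
def peakHeight (P : List ℤ) (i : ℕ) : ℤ := (P.take (i + 1)).sum

/-- Every peak is at odd height; by convention the empty path has one peak at height 0
(so `AllPeaksOdd []` is false). -/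
def AllPeaksOdd (P : List ℤ) : Prop :=
  (P = [] → Odd (0 : ℤ)) ∧ ∀ i, IsPeak P i → Odd (peakHeight P i)

/-- Every peak is at even height; by convention the empty path has one peak at height 0. -/
def AllPeaksEven (P : List ℤ) : Prop :=
  (P = [] → Even (0 : ℤ)) ∧ ∀ i, IsPeak P i → Even (peakHeight P i)

/-- The Motzkin path has no flatstep at ground level. -/
def NoGroundFlat (M : List ℤ) : Prop :=
  ∀ i, M[i]? = some 0 → (M.take i).sum ≠ 0

/-- Replacement of a contiguous pair of Dyck steps by a Motzkin step:
(U,U) ↦ U, (D,U) ↦ F, (D,D) ↦ D. -/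
def pairStep (a b : ℤ) : ℤ :=
  if a = 1 ∧ b = 1 then 1
  else if a = -1 ∧ b = 1 then 0
  else if a = -1 ∧ b = -1 then -1
  else 0

/-- Split a list of steps into contiguous pairs and replace each pair via `pairStep`. -/
def pairContract (P : List ℤ) : List ℤ :=
  (List.range (P.length / 2)).map fun k => pairStep (P.getD (2 * k) 0) (P.getD (2 * k + 1) 0)

/-- The number of downsteps ending at ground level. -/
def groundDownCount (P : List ℤ) : ℕ :=
  ((Finset.range P.length).filter fun i =>
    P[i]? = some (-1) ∧ (P.take (i + 1)).sum = 0).card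

/-- The number of flatsteps at ground level. -/
def groundFlatCount (M : List ℤ) : ℕ :=
  ((Finset.range M.length).filter fun i =>
    M[i]? = some 0 ∧ (M.take i).sum = 0).card

/-- The number of peaks. -/
def peakCount (P : List ℤ) : ℕ :=
  ((Finset.range P.length).filter fun i =>
    P[i]? = some 1 ∧ P[i + 1]? = some (-1)).card

/-- The number of occurrences of an upstep immediately followed by an upstep. -/
def uuCount (M : List ℤ) : ℕ :=
  ((Finset.range M.length).filter fun i =>
    M[i]? = some 1 ∧ M[i + 1]? = some 1).card

/-- The number of occurrences of a flatstep immediately followed by an upstep. -/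
def fuCount (M : List ℤ) : ℕ :=
  ((Finset.range M.length).filter fun i =>
    M[i]? = some 0 ∧ M[i + 1]? = some 1).card

def expandStep (s : ℤ) : List ℤ := if s = 1 then [1,1] else if s = 0 then [-1,1] else [-1,-1]

def pairExpand (M : List ℤ) : List ℤ := M.flatMap expandStep

def fstE (s : ℤ) : ℤ := if s = 1 then 1 else -1

def sndE (s : ℤ) : ℤ := if s = 1 then 1 else if s = 0 then 1 else -1

lemma expandStep_eq (s : ℤ) : expandStep s = [fstE s, sndE s] := by
  unfold expandStep fstE sndE
  split_ifs <;> simp_all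

@[simp] lemma pairExpand_nil : pairExpand [] = [] := rfl

@[simp] lemma pairExpand_cons (s : ℤ) (M : List ℤ) :
    pairExpand (s :: M) = fstE s :: sndE s :: pairExpand M := by
  simp [pairExpand, expandStep_eq]

@[simp] lemma pairExpand_length (M : List ℤ) : (pairExpand M).length = 2 * M.length := by
  induction M with
  | nil => rfl
  | cons s M ih => simp [ih]; ring

@[simp] lemma pairContract_nil : pairContract [] = [] := rfl

lemma pairContract_cons_cons (a b : ℤ) (l : List ℤ) :
    pairContract (a :: b :: l) = pairStep a b :: pairContract l := by
  unfold pairContract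
  have hlen : (a :: b :: l).length / 2 = l.length / 2 + 1 := by
    simp [List.length_cons]; omega
  rw [hlen, List.range_succ_eq_map, List.map_cons, List.map_map]
  refine congrArg₂ _ rfl ?_
  apply List.map_congr_left
  intro k _
  have h1 : 2 * (k + 1) = 2 * k + 1 + 1 := by ring
  have h2 : 2 * (k + 1) + 1 = (2 * k + 1) + 1 + 1 := by ring
  simp only [Function.comp_apply, h1, h2, List.getD_cons_succ]

lemma pairContract_length (P : List ℤ) : (pairContract P).length = P.length / 2 := by
  simp [pairContract]

lemma pairStep_mem (a b : ℤ) : pairStep a b = 1 ∨ pairStep a b = 0 ∨ pairStep a b = -1 := by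
  unfold pairStep; split_ifs <;> simp

lemma pairContract_steps (P : List ℤ) :
    ∀ s ∈ pairContract P, s = 1 ∨ s = 0 ∨ s = -1 := by
  intro s hs
  simp only [pairContract, List.mem_map] at hs
  obtain ⟨k, -, rfl⟩ := hs
  exact pairStep_mem _ _

-- sum of a take, succ step

lemma take_sum_succ (L : List ℤ) (i : ℕ) :
    (L.take (i+1)).sum = (L.take i).sum + L.getD i 0 := by
  rw [List.take_succ, List.sum_append, List.getD_eq_getElem?_getD]
  cases h : L[i]? <;> simp [h]

lemma getD_eq_get? (L : List ℤ) (i : ℕ) : L[i]? = L[i]? := rfl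

lemma get?_of_lt (L : List ℤ) (i : ℕ) (h : i < L.length) : L[i]? = some (L.getD i 0) := by
  rw [List.getElem?_eq_getElem h, List.getD_eq_getElem _ _ h]

lemma get?_pairExpand_even (M : List ℤ) (k : ℕ) :
    (pairExpand M)[2*k]? = (M[k]?).map fstE := by
  induction M generalizing k with
  | nil => simp
  | cons s M ih =>
    cases k with
    | zero => simp
    | succ k =>
      have : 2 * (k+1) = 2*k + 1 + 1 := by ring
      simp only [pairExpand_cons, this, List.getElem?_cons_succ, ih]

lemma get?_pairExpand_odd (M : List ℤ) (k : ℕ) :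
    (pairExpand M)[2*k+1]? = (M[k]?).map sndE := by
  induction M generalizing k with
  | nil => simp
  | cons s M ih =>
    cases k with
    | zero => simp
    | succ k =>
      have : 2 * (k+1) + 1 = (2*k+1) + 1 + 1 := by ring
      simp only [pairExpand_cons, this, List.getElem?_cons_succ, ih]

lemma sum_take_pairExpand (M : List ℤ) (hM : ∀ s ∈ M, s = 1 ∨ s = 0 ∨ s = -1) (k : ℕ) :
    ((pairExpand M).take (2*k)).sum = 2 * (M.take k).sum := by
  induction M generalizing k with
  | nil => simp
  | cons s M ih =>
    cases k with
    | zero => simp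
    | succ k =>
      have h2 : 2 * (k+1) = (2*k) + 1 + 1 := by ring
      rw [h2, pairExpand_cons, List.take_succ_cons, List.take_succ_cons, List.take_succ_cons,
        List.sum_cons, List.sum_cons, List.sum_cons,
        ih (fun x hx => hM x (List.mem_cons_of_mem _ hx))]
      have hs := hM s (List.mem_cons_self)
      rcases hs with rfl | rfl | rfl <;> simp [fstE, sndE] <;> ring

def twoStepInduction {motive : List ℤ → Prop} (h0 : motive []) (h1 : ∀ a, motive [a])
    (h2 : ∀ a b l, motive l → motive (a :: b :: l)) : ∀ l, motive l
  | [] => h0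
  | [a] => h1 a
  | a :: b :: l => h2 a b l (twoStepInduction h0 h1 h2 l)

lemma expand_pairStep (a b : ℤ) (ha : a = 1 ∨ a = -1) (hb : b = 1 ∨ b = -1)
    (hnot : ¬(a = 1 ∧ b = -1)) : expandStep (pairStep a b) = [a, b] := by
  rcases ha with rfl | rfl <;> rcases hb with rfl | rfl <;> simp_all [pairStep, expandStep]

lemma pairStep_expand (s : ℤ) (hs : s = 1 ∨ s = 0 ∨ s = -1) :
    pairStep (fstE s) (sndE s) = s := by
  rcases hs with rfl | rfl | rfl <;> simp [fstE, sndE, pairStep]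

lemma pairContract_pairExpand (M : List ℤ) (hM : ∀ s ∈ M, s = 1 ∨ s = 0 ∨ s = -1) :
    pairContract (pairExpand M) = M := by
  induction M with
  | nil => simp
  | cons s M ih =>
    rw [pairExpand_cons, pairContract_cons_cons,
      ih (fun x hx => hM x (List.mem_cons_of_mem _ hx)),
      pairStep_expand s (hM s (List.mem_cons_self))]

lemma pairExpand_pairContract (P : List ℤ) (hP : ∀ s ∈ P, s = 1 ∨ s = -1)
    (heven : Even P.length)
    (hnoUD : ∀ k, ¬(P.getD (2*k) 0 = 1 ∧ P.getD (2*k+1) 0 = -1)) :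
    pairExpand (pairContract P) = P := by
  induction P using twoStepInduction with
  | h0 => simp
  | h1 a => simp at heven
  | h2 a b l ih =>
    rw [pairContract_cons_cons, pairExpand, List.flatMap_cons,
      expand_pairStep a b (hP a (by simp)) (hP b (by simp)) ?_, ← pairExpand]
    · rw [ih (fun x hx => hP x (by simp [hx]))]
      · rfl
      · simpa [Nat.even_add_one, parity_simps] using heven
      · intro k
        have := hnoUD (k+1)
        simpa [show 2*(k+1) = 2*k+1+1 by ring, show 2*(k+1)+1 = (2*k+1)+1+1 by ring] using this
    · have := hnoUD 0
      simpa using this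

lemma parity_sum (L : List ℤ) (hL : ∀ s ∈ L, s = 1 ∨ s = -1) :
    (Even L.sum ↔ Even L.length) := by
  induction L with
  | nil => simp
  | cons a l ih =>
    have ha := hL a (by simp)
    have hodd : Odd a := by rcases ha with rfl | rfl <;> decide
    rw [List.sum_cons, List.length_cons, Int.even_add, Nat.even_add_one,
      ih (fun x hx => hL x (by simp [hx]))]
    simp [Int.not_even_iff_odd.2 hodd]

lemma noUD_of (P : List ℤ) (hP : ∀ s ∈ P, s = 1 ∨ s = -1) (heven : Even P.length)
    (hpeaks : ∀ i, IsPeak P i → Even (peakHeight P i)) :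
    ∀ k, ¬(P.getD (2*k) 0 = 1 ∧ P.getD (2*k+1) 0 = -1) := by
  rintro k ⟨h1, h2⟩
  have hlt : 2*k+1 < P.length := by
    by_contra h
    rw [List.getD_eq_default _ _ (by omega)] at h2
    exact absurd h2 (by norm_num)
  have hpeak : IsPeak P (2*k) := by
    constructor
    · rw [get?_of_lt _ _ (by omega), h1]
    · rw [get?_of_lt _ _ hlt, h2]
  have hev := hpeaks _ hpeak
  unfold peakHeight at hev
  rw [take_sum_succ, h1] at hev
  have hevsum : Even ((P.take (2*k)).sum) := by
    rw [parity_sum _ (fun x hx => hP x (List.mem_of_mem_take hx)), List.length_take,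
      Nat.even_iff]
    rw [Nat.even_iff] at heven
    omega
  rcases hevsum with ⟨m, hm⟩
  rcases hev with ⟨m', hm'⟩
  omega

lemma pairExpand_steps (M : List ℤ) : ∀ x ∈ pairExpand M, x = 1 ∨ x = -1 := by
  intro x hx
  rw [pairExpand, List.mem_flatMap] at hx
  obtain ⟨s, -, hx⟩ := hx
  rw [expandStep_eq] at hx
  unfold fstE sndE at hx
  simp at hx
  rcases hx with rfl | rfl <;> split_ifs <;> simp

lemma groundDownCount_pairExpand (M : List ℤ) (hM : ∀ s ∈ M, s = 1 ∨ s = 0 ∨ s = -1) :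
    groundDownCount (pairExpand M) = groundDownCount M := by
  unfold groundDownCount
  symm
  apply Finset.card_bij (fun k _ => 2*k+1)
  · intro k hk
    simp only [Finset.mem_filter, Finset.mem_range] at hk ⊢
    obtain ⟨hklt, hget, hsum⟩ := hk
    refine ⟨by simp; omega, ?_, ?_⟩
    · rw [get?_pairExpand_odd, hget]
      rfl
    · rw [show 2*k+1+1 = 2*(k+1) by ring, sum_take_pairExpand M hM, hsum, mul_zero]
  · intro a _ b _ h
    omega
  · intro i hi
    simp only [Finset.mem_filter, Finset.mem_range] at hi
    obtain ⟨hilt, hget, hsum⟩ := hi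
    rcases Nat.even_or_odd i with ⟨k, hk⟩ | ⟨k, hk⟩
    · exfalso
      subst hk
      rw [show k+k = 2*k by ring] at hget hsum
      rw [take_sum_succ, sum_take_pairExpand M hM] at hsum
      have : (pairExpand M).getD (2*k) 0 = -1 := by
        rw [List.getD_eq_getElem?_getD, hget]
        rfl
      rw [this] at hsum
      omega
    · subst hk
      rw [show 2*k+1 = 2*k+1 by rfl] at hget hsum
      have hk' : k < M.length := by
        rw [pairExpand_length] at hilt; omega
      obtain ⟨s, hs⟩ : ∃ s, M[k]? = some s := by
        rw [get?_of_lt _ _ hk']; exact ⟨_, rfl⟩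
      have hsmem : s ∈ M := List.mem_of_getElem? hs
      have hsval : sndE s = -1 := by
        rw [get?_pairExpand_odd, hs] at hget
        simpa using hget
      have hs1 : s = -1 := by
        rcases hM s hsmem with rfl | rfl | rfl <;> simp [sndE] at hsval ⊢
      refine ⟨k, ?_, rfl⟩
      simp only [Finset.mem_filter, Finset.mem_range]
      refine ⟨hk', by rw [hs, hs1], ?_⟩
      rw [show 2*k+1+1 = 2*(k+1) by ring, sum_take_pairExpand M hM] at hsum
      omega

lemma forward_dir (n : ℕ) (P : List ℤ) (hlen : P.length = 2 * n) (hD : IsDyckPath P)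
    (hE : AllPeaksEven P) :
    (pairContract P).length = n ∧ IsMotzkinPath (pairContract P) ∧
      NoGroundFlat (pairContract P) ∧
      groundDownCount (pairContract P) = groundDownCount P ∧
      pairExpand (pairContract P) = P := by
  obtain ⟨hsteps, hnn, hsum⟩ := hD
  have heven : Even P.length := ⟨n, by omega⟩
  have hPM : pairExpand (pairContract P) = P :=
    pairExpand_pairContract P hsteps heven (noUD_of P hsteps heven hE.2)
  set M := pairContract P with hMdef
  have hM : ∀ s ∈ M, s = 1 ∨ s = 0 ∨ s = -1 := pairContract_steps P
  have hMlen : M.length = n := by rw [hMdef, pairContract_length, hlen]; omega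
  refine ⟨hMlen, ⟨hM, ?_, ?_⟩, ?_, ?_, hPM⟩
  · intro j
    have := hnn (2*j)
    rw [← hPM, sum_take_pairExpand M hM] at this
    omega
  · have h := sum_take_pairExpand M hM M.length
    rw [List.take_length, hPM] at h
    have : (P.take (2 * M.length)).sum = P.sum := by
      rw [List.take_of_length_le]
      rw [hlen, hMlen]
    rw [this, hsum] at h
    omega
  · intro i hget htake
    have hi : i < M.length := by
      by_contra h
      rw [getD_eq_get?, List.getElem?_eq_none (by omega)] at hget
      simp at hget
    have hP2i : (P.take (2*i)).sum = 0 := by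
      rw [← hPM, sum_take_pairExpand M hM, htake, mul_zero]
    have hPget : P.getD (2*i) 0 = -1 := by
      rw [← hPM, List.getD_eq_getElem?_getD,
        get?_pairExpand_even, hget]
      rfl
    have := hnn (2*i+1)
    rw [take_sum_succ, hP2i, hPget] at this
    omega
  · rw [← hPM, groundDownCount_pairExpand M hM]

lemma backward_dir (n : ℕ) (M : List ℤ) (hlen : M.length = n) (hMo : IsMotzkinPath M)
    (hNG : NoGroundFlat M) :
    (pairExpand M).length = 2 * n ∧ IsDyckPath (pairExpand M) ∧
      AllPeaksEven (pairExpand M) ∧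
      groundDownCount (pairExpand M) = groundDownCount M ∧
      pairContract (pairExpand M) = M := by
  obtain ⟨hM, hnn, hsum⟩ := hMo
  refine ⟨by rw [pairExpand_length, hlen], ⟨pairExpand_steps M, ?_, ?_⟩, ⟨fun _ => Even.zero, ?_⟩,
    groundDownCount_pairExpand M hM, pairContract_pairExpand M hM⟩
  · intro j
    rcases Nat.even_or_odd j with ⟨k, hk⟩ | ⟨k, hk⟩
    · subst hk
      rw [show k+k = 2*k by ring, sum_take_pairExpand M hM]
      have := hnn k
      omega
    · subst hk
      rw [take_sum_succ, sum_take_pairExpand M hM]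
      cases hget : M[k]? with
      | none =>
        have : (pairExpand M).getD (2*k) 0 = 0 := by
          rw [List.getD_eq_getElem?_getD, get?_pairExpand_even, hget]
          rfl
        rw [this]
        have := hnn k
        omega
      | some s =>
        have hgd : (pairExpand M).getD (2*k) 0 = fstE s := by
          rw [List.getD_eq_getElem?_getD, get?_pairExpand_even, hget]
          rfl
        rw [hgd]
        have hsmem : s ∈ M := List.mem_of_getElem? hget
        rcases hM s hsmem with rfl | rfl | rfl
        · have := hnn k
          simp [fstE]
          omega
        · have hne := hNG k hget
          have := hnn k
          simp [fstE]
          omega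
        · have h1 := hnn (k+1)
          rw [take_sum_succ, List.getD_eq_getElem?_getD, hget] at h1
          simp [fstE]
          simp at h1
          omega
  · have h := sum_take_pairExpand M hM M.length
    rw [List.take_length, ← pairExpand_length, List.take_length, hsum] at h
    omega
  · intro i hpeak
    rcases Nat.even_or_odd i with ⟨k, hk⟩ | ⟨k, hk⟩
    · exfalso
      subst hk
      obtain ⟨hg1, hg2⟩ := hpeak
      rw [show k+k = 2*k by ring] at hg1 hg2
      rw [get?_pairExpand_even] at hg1
      cases hget : M[k]? with
      | none => rw [hget] at hg1; simp at hg1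
      | some s =>
        rw [hget] at hg1
        simp only [Option.map_some] at hg1
        have hs1 : s = 1 := by
          by_contra h
          rw [show fstE s = -1 by simp [fstE, h]] at hg1
          simp at hg1
        subst hs1
        rw [get?_pairExpand_odd, hget] at hg2
        simp [sndE] at hg2
    · subst hk
      unfold peakHeight
      rw [show 2*k+1+1 = 2*(k+1) by ring, sum_take_pairExpand M hM]
      exact ⟨_, two_mul _⟩

/-- For `n ≥ 0` and `k ≥ 0`, the number of Dyck paths of semilength `n` with all peaks at
even height and exactly `k` downsteps ending at ground level equals the number of Motzkin
paths of length `n` with no flatstep at ground level and exactly `k` downsteps ending at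
ground level. -/
theorem even_peaks_ground_down_eq_ground_down (n k : ℕ) :
    {P : List ℤ | P.length = 2 * n ∧ IsDyckPath P ∧ AllPeaksEven P ∧
      groundDownCount P = k}.ncard =
    {M : List ℤ | M.length = n ∧ IsMotzkinPath M ∧ NoGroundFlat M ∧
      groundDownCount M = k}.ncard := by
  set S : Set (List ℤ) := {P : List ℤ | P.length = 2 * n ∧ IsDyckPath P ∧ AllPeaksEven P ∧
      groundDownCount P = k} with hS
  set T : Set (List ℤ) := {M : List ℤ | M.length = n ∧ IsMotzkinPath M ∧ NoGroundFlat M ∧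
      groundDownCount M = k} with hT
  have hinj : Set.InjOn pairContract S := by
    intro P1 h1 P2 h2 heq
    obtain ⟨hl1, hd1, he1, -⟩ := h1
    obtain ⟨hl2, hd2, he2, -⟩ := h2
    have e1 := (forward_dir n P1 hl1 hd1 he1).2.2.2.2
    have e2 := (forward_dir n P2 hl2 hd2 he2).2.2.2.2
    rw [← e1, ← e2, heq]
  have himg : pairContract '' S = T := by
    ext M
    constructor
    · rintro ⟨P, ⟨hl, hd, he, hc⟩, rfl⟩
      obtain ⟨h1, h2, h3, h4, -⟩ := forward_dir n P hl hd he
      exact ⟨h1, h2, h3, by rw [h4, hc]⟩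
    · rintro ⟨hl, hm, hng, hc⟩
      obtain ⟨h1, h2, h3, h4, h5⟩ := backward_dir n M hl hm hng
      exact ⟨pairExpand M, ⟨h1, h2, h3, by rw [h4, hc]⟩, h5⟩
  rw [← himg]
  exact (Set.ncard_image_of_injOn hinj).symm
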